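/- arXiv:1002.0519 — 2 statements merged into one kernel-verified Lean document; each statement's English description precedes it below -/
import Mathlib

section
/- For every x ∈ ℂ, the set SOC(x+Γ) of coincidence rotations of the shifted square lattice x+Γ is a subgroup of SOC(Γ): SOC(x+Γ) ⊆ SOC(Γ), the identity belongs to SOC(x+Γ), and SOC(x+Γ) is closed under composition and under inverses. -/
open Pointwise Complex ComplexConjugate

/-- The square lattice `Γ = ℤ[i]`, i.e. the Gaussian integers viewed as an additive
subgroup of `ℂ`. -/
noncomputable def Zi : AddSubgroup ℂ :=
  AddMonoidHom.range (GaussianInt.toComplex.toAddMonoidHom)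

/-- `f` is (the underlying map of) a surjective real-linear isometry of `ℂ`. -/
def IsLinIso (f : ℂ → ℂ) : Prop := ∃ R : ℂ ≃ₗᵢ[ℝ] ℂ, ⇑R = f

/-- `f` is a rotation of `ℂ`, i.e. multiplication by a complex number of modulus 1. -/
def IsRotation (f : ℂ → ℂ) : Prop := ∃ u : ℂ, ‖u‖ = 1 ∧ ∀ w, f w = u * w

/-- `f` is a reflection of `ℂ`, i.e. `w ↦ u * conj w` for a complex number `u` of
modulus 1. -/
def IsReflection (f : ℂ → ℂ) : Prop := ∃ u : ℂ, ‖u‖ = 1 ∧ ∀ w, f w = u * conj w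

/-- The shifted square lattice `x + Γ` as a subset of `ℂ`. -/
noncomputable def shiftedZi (x : ℂ) : Set ℂ := x +ᵥ (Zi : Set ℂ)

/-- `OC (x+Γ)`: the set of (maps of) surjective real-linear isometries `f` of `ℂ` such
that `(x+Γ) ∩ f(x+Γ)` is a coset `c + Λ`, with `c ∈ x+Γ` and `Λ` a finite-index
additive subgroup of `Γ = ℤ[i]`. -/
noncomputable def OCs (x : ℂ) : Set (ℂ → ℂ) :=
  {f | IsLinIso f ∧ ∃ c ∈ shiftedZi x, ∃ Λ : AddSubgroup ℂ, Λ ≤ Zi ∧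
    Λ.relIndex Zi ≠ 0 ∧ shiftedZi x ∩ (f '' shiftedZi x) = c +ᵥ (Λ : Set ℂ)}

/-- `SOC (x+Γ)`: the rotations among the coincidence isometries of `x + Γ`. -/
noncomputable def SOCs (x : ℂ) : Set (ℂ → ℂ) := {f ∈ OCs x | IsRotation f}

/-!
A rotation `w ↦ u w` is a coincidence isometry of `x + Γ` iff `Γ ∩ uΓ` has finite index in `Γ`
and `(x + Γ) ∩ u(x + Γ)` is nonempty. For the square lattice the first condition says `u ∈ ℚ(i)`
and the second says `(u - 1) x ∈ Γ + uΓ`, which is vacuous for `x = 0` and stable under `u ↦ u⁻¹`.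
For a product write `u = p / q`, `v = p' / q'` in lowest terms: the Gaussian integer
`(p p' - q q') x` lies in the ideals `(p, q')` and `(q, p')`, which are comaximal with product
`(p p', q q')`; dividing by `q q'` gives `(u v - 1) x ∈ Γ + uvΓ`.
-/

theorem vadd_coset_inter_vadd_coset_eq {G : Type*} [AddGroup G] {H K : AddSubgroup G}
    {a b c : G} (hc : c ∈ (a +ᵥ (H : Set G)) ∩ (b +ᵥ (K : Set G))) :
    (a +ᵥ (H : Set G)) ∩ (b +ᵥ (K : Set G)) = c +ᵥ ((H ⊓ K : AddSubgroup G) : Set G) := by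
  rw [(leftAddCoset_eq_iff H).2 ((mem_leftAddCoset_iff a).1 hc.1),
    (leftAddCoset_eq_iff K).2 ((mem_leftAddCoset_iff b).1 hc.2), AddSubgroup.coe_inf,
    Set.vadd_set_inter]

theorem Ideal.span_pair_inf_span_pair_eq_of_isCoprime {R : Type*} [CommRing R] {p q p' q' : R}
    (h : IsCoprime p q) (h' : IsCoprime p' q') :
    Ideal.span {p, q'} ⊓ Ideal.span {q, p'} = Ideal.span {p * p', q * q'} := by
  obtain ⟨a, b, hab⟩ := h
  obtain ⟨a', b', hab'⟩ := h'
  have hcop : IsCoprime (Ideal.span {p, q'}) (Ideal.span {q, p'}) := by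
    rw [Ideal.isCoprime_iff_sup_eq, Ideal.eq_top_iff_one, ← hab]
    exact add_mem (Ideal.mul_mem_left _ _ (Ideal.mem_sup_left (Ideal.subset_span (by simp))))
      (Ideal.mul_mem_left _ _ (Ideal.mem_sup_right (Ideal.subset_span (by simp))))
  rw [← Ideal.mul_eq_inf_of_isCoprime hcop, Ideal.span_pair_mul_span_pair]
  apply le_antisymm
  · simp only [Ideal.span_le, Set.insert_subset_iff, Set.singleton_subset_iff, SetLike.mem_coe,
      Ideal.mem_span_pair]
    refine ⟨⟨a' * q, b' * p, ?_⟩, ⟨1, 0, by ring⟩, ⟨0, 1, by ring⟩, ⟨a * q', b * p', ?_⟩⟩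
    · linear_combination (p * q) * hab'
    · linear_combination (q' * p') * hab
  · refine Ideal.span_mono ?_
    simp [Set.insert_subset_iff, mul_comm q q']

open GaussianInt

theorem mem_Zi {w : ℂ} : w ∈ Zi ↔ ∃ g : GaussianInt, (g : ℂ) = w := Iff.rfl

theorem mem_shiftedZi {x y : ℂ} : y ∈ shiftedZi x ↔ ∃ g : GaussianInt, y = x + g := by
  simp only [shiftedZi, Set.mem_vadd_set, SetLike.mem_coe, mem_Zi, vadd_eq_add]
  constructor
  · rintro ⟨w, ⟨g, rfl⟩, rfl⟩
    exact ⟨g, rfl⟩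
  · rintro ⟨g, rfl⟩
    exact ⟨g, ⟨g, rfl⟩, rfl⟩

theorem Zi_fg : Zi.FG := by
  refine ⟨{1, I}, le_antisymm ?_ ?_⟩
  · rw [AddSubgroup.closure_le]
    simp only [Finset.coe_insert, Finset.coe_singleton, Set.insert_subset_iff,
      Set.singleton_subset_iff, SetLike.mem_coe]
    exact ⟨⟨1, toComplex_one⟩, ⟨⟨0, 1⟩, by simp [toComplex_def']⟩⟩
  · rintro _ ⟨g, rfl⟩
    change (g : ℂ) ∈ _
    rw [show (g : ℂ) = g.re • (1 : ℂ) + g.im • I by simp [toComplex_def]]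
    exact add_mem (zsmul_mem (AddSubgroup.subset_closure (by simp)) _)
      (zsmul_mem (AddSubgroup.subset_closure (by simp)) _)

theorem mem_OCs_iff {x : ℂ} (f : ℂ →+ ℂ) :
    ⇑f ∈ OCs x ↔ IsLinIso f ∧ (Zi ⊓ Zi.map f).relIndex Zi ≠ 0 ∧
      (shiftedZi x ∩ f '' shiftedZi x).Nonempty := by
  have himage : f '' shiftedZi x = f x +ᵥ (Zi.map f : Set ℂ) := by
    rw [shiftedZi, Set.image_vadd_distrib, AddSubgroup.coe_map]
  constructor
  · rintro ⟨hf, c, -, Λ, -, hidx, heq⟩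
    have hc : c ∈ shiftedZi x ∩ f '' shiftedZi x := heq ▸ ⟨0, Λ.zero_mem, add_zero c⟩
    refine ⟨hf, ?_, c, hc⟩
    rw [himage, shiftedZi] at heq hc
    rw [vadd_coset_inter_vadd_coset_eq hc] at heq
    have hΛ : (Zi ⊓ Zi.map f : AddSubgroup ℂ) = Λ :=
      SetLike.coe_injective (by simpa using congrArg (-c +ᵥ ·) heq)
    exact hΛ ▸ hidx
  · rintro ⟨hf, hidx, c, hc⟩
    refine ⟨hf, c, hc.1, _, inf_le_left, hidx, ?_⟩
    rw [himage, shiftedZi] at hc ⊢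
    exact vadd_coset_inter_vadd_coset_eq hc

theorem relIndex_Zi_ne_zero_of_mul_mem {Λ : AddSubgroup ℂ} {m : GaussianInt} (hm : m ≠ 0)
    (h : ∀ g : GaussianInt, (m : ℂ) * g ∈ Λ) : Λ.relIndex Zi ≠ 0 := by
  have hn : m.norm.natAbs ≠ 0 := by simpa using hm
  have hfin := AddSubgroup.isFiniteRelIndex_map_nsmulAddMonoidHom_of_fg Zi_fg hn
  have hle : Zi.map (nsmulAddMonoidHom m.norm.natAbs) ≤ Λ := by
    rintro _ ⟨_, ⟨g, rfl⟩, rfl⟩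
    change m.norm.natAbs • (g : ℂ) ∈ Λ
    rw [nsmul_eq_mul, ← map_natCast toComplex, natCast_natAbs_norm, Zsqrtd.norm_eq_mul_conj,
      toComplex_mul, mul_assoc, ← toComplex_mul]
    exact h (star m * g)
  exact fun h0 => AddSubgroup.relIndex_ne_zero (AddSubgroup.relIndex_eq_zero_of_le_left hle h0)

def IsGaussianRational (u : ℂ) : Prop := ∃ p q : GaussianInt, q ≠ 0 ∧ u * q = p

theorem relIndex_Zi_inf_map_mulLeft_ne_zero_iff {u : ℂ} (hu : u ≠ 0) :
    (Zi ⊓ Zi.map (AddMonoidHom.mulLeft u)).relIndex Zi ≠ 0 ↔ IsGaussianRational u := by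
  constructor
  · intro h
    obtain ⟨n, hn, -, ⟨-, w, ⟨q, rfl⟩, hq⟩, -⟩ :=
      AddSubgroup.exists_nsmul_mem_of_relIndex_ne_zero h (⟨1, toComplex_one⟩ : (1 : ℂ) ∈ Zi)
    replace hq : u * (q : ℂ) = (n : GaussianInt) := by simpa using hq
    refine ⟨n, q, ?_, hq⟩
    rintro rfl
    simp [eq_comm, hn.ne'] at hq
  · rintro ⟨p, q, hq, hpq⟩
    have hp : p ≠ 0 := by
      rintro rfl
      simp [hu, hq] at hpq
    refine relIndex_Zi_ne_zero_of_mul_mem hp fun g =>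
      ⟨⟨p * g, toComplex_mul p g⟩, q * g, ⟨q * g, toComplex_mul q g⟩, ?_⟩
    simp [← hpq, mul_assoc]

theorem IsGaussianRational.mul {u v : ℂ} (hu : IsGaussianRational u)
    (hv : IsGaussianRational v) : IsGaussianRational (u * v) := by
  obtain ⟨p, q, hq, hpq⟩ := hu
  obtain ⟨p', q', hq', hpq'⟩ := hv
  exact ⟨p * p', q * q', mul_ne_zero hq hq', by
    rw [toComplex_mul, toComplex_mul, ← hpq, ← hpq']; ring⟩

theorem IsGaussianRational.inv {u : ℂ} (hu0 : u ≠ 0) (hu : IsGaussianRational u) :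
    IsGaussianRational u⁻¹ := by
  obtain ⟨p, q, hq, hpq⟩ := hu
  refine ⟨q, p, ?_, by rw [← hpq, inv_mul_cancel_left₀ hu0]⟩
  rintro rfl
  simp [hu0, hq] at hpq

theorem IsGaussianRational.exists_isCoprime {u : ℂ} (hu : IsGaussianRational u) :
    ∃ p q : GaussianInt, q ≠ 0 ∧ IsCoprime p q ∧ u * q = p := by
  obtain ⟨p, q, hq, hpq⟩ := hu
  obtain ⟨p₀, q₀, d, hrel, rfl, rfl⟩ := UniqueFactorizationMonoid.exists_reduced_factors' p q hq
  have hd : (d : ℂ) ≠ 0 := toComplex_eq_zero.not.2 (left_ne_zero_of_mul hq)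
  refine ⟨p₀, q₀, right_ne_zero_of_mul hq, isRelPrime_iff_isCoprime.1 hrel,
    mul_left_cancel₀ hd ?_⟩
  rw [toComplex_mul, toComplex_mul] at hpq
  linear_combination hpq

def ShiftAdmissible (u x : ℂ) : Prop := ∃ a b : GaussianInt, (a : ℂ) + u * b = u * x - x

theorem shiftedZi_inter_image_mul_nonempty_iff {u x : ℂ} :
    (shiftedZi x ∩ (u * ·) '' shiftedZi x).Nonempty ↔ ShiftAdmissible u x := by
  constructor
  · rintro ⟨y, hy, w, hw, rfl⟩
    obtain ⟨a, ha⟩ := mem_shiftedZi.1 hy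
    obtain ⟨b, rfl⟩ := mem_shiftedZi.1 hw
    exact ⟨a, -b, by rw [toComplex_neg]; linear_combination -ha⟩
  · rintro ⟨a, b, hab⟩
    have hb : x - b ∈ shiftedZi x := mem_shiftedZi.2 ⟨-b, by rw [toComplex_neg]; ring⟩
    exact ⟨x + a, mem_shiftedZi.2 ⟨a, rfl⟩, x - b, hb, by linear_combination -hab⟩

theorem ShiftAdmissible.mul {u v x : ℂ} (hu : IsGaussianRational u) (hv : IsGaussianRational v)
    (hux : ShiftAdmissible u x) (hvx : ShiftAdmissible v x) : ShiftAdmissible (u * v) x := by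
  obtain ⟨p, q, hq, hpq, hu⟩ := hu.exists_isCoprime
  obtain ⟨p', q', hq', hpq', hv⟩ := hv.exists_isCoprime
  obtain ⟨a, b, hab⟩ := hux
  obtain ⟨a', b', hab'⟩ := hvx
  set t := q * a + p * b
  set t' := q' * a' + p' * b'
  have ht : (t : ℂ) = (p - q) * x := by
    simp only [t, toComplex_add, toComplex_mul]
    linear_combination (q : ℂ) * hab + (x - b) * hu
  have ht' : (t' : ℂ) = (p' - q') * x := by
    simp only [t', toComplex_add, toComplex_mul]
    linear_combination (q' : ℂ) * hab' + (x - b') * hv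
  have hS : p * t' + q' * t = p' * t + q * t' := toComplex_injective (by
    simp only [toComplex_add, toComplex_mul, ht, ht']
    ring)
  have hmem : p * t' + q' * t ∈ Ideal.span {p, q'} ⊓ Ideal.span {q, p'} :=
    ⟨Ideal.mem_span_pair.2 ⟨t', t, by ring⟩, hS ▸ Ideal.mem_span_pair.2 ⟨t', t, by ring⟩⟩
  rw [Ideal.span_pair_inf_span_pair_eq_of_isCoprime hpq hpq'] at hmem
  obtain ⟨α, β, hαβ⟩ := Ideal.mem_span_pair.1 hmem
  have hαβ' := congrArg toComplex hαβ
  simp only [toComplex_add, toComplex_mul, ht, ht'] at hαβ'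
  have hqq' : (q : ℂ) * q' ≠ 0 :=
    mul_ne_zero (toComplex_eq_zero.not.2 hq) (toComplex_eq_zero.not.2 hq')
  refine ⟨β, α, mul_left_cancel₀ hqq' ?_⟩
  linear_combination hαβ' + (α - x) * v * q' * hu + (α - x) * p * hv

theorem ShiftAdmissible.inv {u x : ℂ} (hu : u ≠ 0) (h : ShiftAdmissible u x) :
    ShiftAdmissible u⁻¹ x := by
  obtain ⟨a, b, hab⟩ := h
  refine ⟨-b, -a, ?_⟩
  rw [toComplex_neg, toComplex_neg]
  linear_combination (-u⁻¹) * hab + (b - x) * inv_mul_cancel₀ hu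

theorem isLinIso_mul_left {u : ℂ} (hu : ‖u‖ = 1) : IsLinIso (u * ·) :=
  ⟨rotation ⟨u, mem_sphere_zero_iff_norm.2 hu⟩, rfl⟩

theorem mem_SOCs_iff {x : ℂ} {f : ℂ → ℂ} :
    f ∈ SOCs x ↔
      ∃ u : ℂ, ‖u‖ = 1 ∧ f = (u * ·) ∧ IsGaussianRational u ∧ ShiftAdmissible u x := by
  constructor
  · rintro ⟨hOC, u, hu, hf⟩
    obtain rfl : f = ⇑(AddMonoidHom.mulLeft u) := funext hf
    obtain ⟨-, hidx, hne⟩ := (mem_OCs_iff _).1 hOC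
    have hu0 : u ≠ 0 := norm_ne_zero_iff.1 (by simp [hu])
    exact ⟨u, hu, rfl, (relIndex_Zi_inf_map_mulLeft_ne_zero_iff hu0).1 hidx,
      shiftedZi_inter_image_mul_nonempty_iff.1 hne⟩
  · rintro ⟨u, hu, rfl, hrat, hadm⟩
    have hu0 : u ≠ 0 := norm_ne_zero_iff.1 (by simp [hu])
    refine ⟨(mem_OCs_iff (AddMonoidHom.mulLeft u)).2 ⟨isLinIso_mul_left hu,
      (relIndex_Zi_inf_map_mulLeft_ne_zero_iff hu0).2 hrat,
      shiftedZi_inter_image_mul_nonempty_iff.2 hadm⟩, u, hu, fun _ => rfl⟩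

theorem SOC_shifted_subgroup (x : ℂ) :
    SOCs x ⊆ SOCs 0 ∧ id ∈ SOCs x ∧
      (∀ f ∈ SOCs x, ∀ g ∈ SOCs x, f ∘ g ∈ SOCs x) ∧
      (∀ f ∈ SOCs x, ∀ g : ℂ → ℂ, g ∘ f = id → f ∘ g = id → g ∈ SOCs x) := by
  refine ⟨fun f hf => ?_, ?_, fun f hf g hg => ?_, fun f hf g hgf hfg => ?_⟩
  · obtain ⟨u, hu, rfl, hrat, -⟩ := mem_SOCs_iff.1 hf
    exact mem_SOCs_iff.2 ⟨u, hu, rfl, hrat, 0, 0, by simp⟩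
  · exact mem_SOCs_iff.2 ⟨1, by simp, funext fun w => (one_mul w).symm,
      ⟨1, 1, one_ne_zero, by simp⟩, 0, 0, by simp⟩
  · obtain ⟨u, hu, rfl, hurat, hux⟩ := mem_SOCs_iff.1 hf
    obtain ⟨v, hv, rfl, hvrat, hvx⟩ := mem_SOCs_iff.1 hg
    exact mem_SOCs_iff.2 ⟨u * v, by simp [hu, hv], funext fun w => (mul_assoc u v w).symm,
      hurat.mul hvrat, hux.mul hurat hvrat hvx⟩
  · obtain ⟨u, hu, rfl, hurat, hux⟩ := mem_SOCs_iff.1 hf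
    have hu0 : u ≠ 0 := norm_ne_zero_iff.1 (by simp [hu])
    refine mem_SOCs_iff.2 ⟨u⁻¹, by simp [hu], funext fun w => ?_, hurat.inv hu0, hux.inv hu0⟩
    exact (eq_inv_mul_iff_mul_eq₀ hu0).2 (congrFun hfg w)
end

section
/- Let x = a + b·i ∈ ℂ with a rational and b irrational. If 2a ∈ ℤ, then OC(x+Γ) = {id, T}, where T is the reflection along the imaginary axis, T(w) = −conj(w); otherwise OC(x+Γ) = {id}. -/
open Pointwise Complex ComplexConjugate

/-!
Every coincidence isometry `R` of `x + Γ` sends some point of `x + Γ` into `x + Γ` and some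
nonzero `g ∈ Γ` into `Γ`. Writing `R w = u w` or `R w = u w̄`, the second fact puts `u` in
`ℚ(i)`. For a rotation the first then gives `(u - 1) x ∈ ℚ(i)`, so `u = 1` because
`x ∉ ℚ(i)`. For a reflection it gives `u x̄ - x ∈ ℚ(i)`, i.e. `(u + 1) b i ∈ ℚ(i)` since `a`
is rational, so `u = -1`; and `w ↦ -w̄` maps some point of `x + Γ` into `x + Γ` exactly when
`2a ∈ ℤ`, in which case it maps `x + Γ` onto itself. The argument works verbatim with any
subfield `K ⊆ ℝ` in place of `ℚ`.
-/

/-- `ℚ(i)` when `K = ℚ`. -/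
def Subfield.complexify (K : Subfield ℝ) : Subfield ℂ where
  carrier := {z | z.re ∈ K ∧ z.im ∈ K}
  zero_mem' := ⟨K.zero_mem, K.zero_mem⟩
  one_mem' := by simp [K.zero_mem, K.one_mem]
  add_mem' hz hw := ⟨K.add_mem hz.1 hw.1, K.add_mem hz.2 hw.2⟩
  neg_mem' hz := ⟨K.neg_mem hz.1, K.neg_mem hz.2⟩
  mul_mem' hz hw := by
    simp only [Set.mem_ofPred_eq, mul_re, mul_im]
    exact ⟨K.sub_mem (K.mul_mem hz.1 hw.1) (K.mul_mem hz.2 hw.2),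
      K.add_mem (K.mul_mem hz.1 hw.2) (K.mul_mem hz.2 hw.1)⟩
  inv_mem' z hz := by
    have hn : normSq z ∈ K := by
      rw [normSq_apply]; exact K.add_mem (K.mul_mem hz.1 hz.1) (K.mul_mem hz.2 hz.2)
    simp only [Set.mem_ofPred_eq, inv_re, inv_im]
    exact ⟨K.div_mem hz.1 hn, K.div_mem (K.neg_mem hz.2) hn⟩

namespace Subfield.complexify

variable {K : Subfield ℝ}

theorem mem_iff {z : ℂ} : z ∈ K.complexify ↔ z.re ∈ K ∧ z.im ∈ K := Iff.rfl

theorem ofReal_mem_iff {r : ℝ} : (r : ℂ) ∈ K.complexify ↔ r ∈ K := by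
  simp [mem_iff, K.zero_mem]

theorem I_mem : I ∈ K.complexify := by
  simp [mem_iff, K.zero_mem, K.one_mem]

theorem conj_mem {z : ℂ} (hz : z ∈ K.complexify) : conj z ∈ K.complexify :=
  ⟨by simpa using hz.1, by simpa using K.neg_mem hz.2⟩

theorem Zi_le : Zi ≤ K.complexify.toAddSubgroup := by
  rintro _ ⟨g, rfl⟩
  exact ⟨by simpa using K.intCast_mem g.re, by simpa using K.intCast_mem g.im⟩

end Subfield.complexify

theorem conj_mem_Zi {z : ℂ} (hz : z ∈ Zi) : conj z ∈ Zi := by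
  obtain ⟨g, rfl⟩ := hz
  exact ⟨star g, GaussianInt.toComplex_star g⟩

theorem exists_intCast_eq_re_of_mem_Zi {z : ℂ} (hz : z ∈ Zi) : ∃ n : ℤ, (n : ℝ) = z.re := by
  obtain ⟨g, rfl⟩ := hz
  exact ⟨g.re, by simp⟩

instance : Infinite Zi :=
  Infinite.of_injective (fun n : ℤ => (⟨n, n, by simp⟩ : Zi))
    (fun m n h => by simpa [Subtype.ext_iff] using h)

theorem mem_shiftedZi_iff {x z : ℂ} : z ∈ shiftedZi x ↔ z - x ∈ Zi := by
  simp only [shiftedZi, Set.mem_vadd_set, SetLike.mem_coe, vadd_eq_add]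
  exact ⟨by rintro ⟨g, hg, rfl⟩; simpa using hg, fun h => ⟨z - x, h, by ring⟩⟩

theorem mem_OCs_of_image_eq {x : ℂ} (R : ℂ ≃ₗᵢ[ℝ] ℂ) (h : R '' shiftedZi x = shiftedZi x) :
    ⇑R ∈ OCs x := by
  refine ⟨⟨R, rfl⟩, x, mem_shiftedZi_iff.2 (by simp), Zi, le_rfl, by simp, ?_⟩
  rw [h, Set.inter_self]
  ext z
  simp [shiftedZi, Set.mem_vadd_set]

theorem id_mem_OCs (x : ℂ) : id ∈ OCs x :=
  mem_OCs_of_image_eq (LinearIsometryEquiv.refl ℝ ℂ) (Set.image_id _)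

/-- `c` and `c + l`, for a nonzero `l ∈ Λ`, lie in `(x + Γ) ∩ R(x + Γ)`; `Λ ≠ 0` because it has
finite index in the infinite group `Γ`. -/
theorem exists_apply_mem_of_mem_OCs {x : ℂ} {R : ℂ ≃ₗᵢ[ℝ] ℂ} (hR : ⇑R ∈ OCs x) :
    ∃ z ∈ shiftedZi x, R z ∈ shiftedZi x ∧ ∃ g ∈ Zi, g ≠ 0 ∧ R g ∈ Zi := by
  obtain ⟨-, c, -, Λ, hΛ, hindex, hinter⟩ := hR
  obtain rfl | ⟨l, hl, hl0⟩ := Λ.bot_or_exists_ne_zero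
  · exact (hindex (by rw [AddSubgroup.relIndex_bot_left]; exact Nat.card_eq_zero_of_infinite)).elim
  have hc : c ∈ shiftedZi x ∩ R '' shiftedZi x := by rw [hinter]; exact ⟨0, Λ.zero_mem, by simp⟩
  have hcl : c + l ∈ shiftedZi x ∩ R '' shiftedZi x := by rw [hinter]; exact ⟨l, hl, rfl⟩
  obtain ⟨hc, z, hz, rfl⟩ := hc
  obtain ⟨-, z', hz', hRz'⟩ := hcl
  have hRg : R (z' - z) = l := by rw [map_sub, hRz']; ring
  refine ⟨z, hz, hc, z' - z, ?_, fun h => hl0 (by rw [← hRg, h, map_zero]), hRg ▸ hΛ hl⟩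
  simpa using Zi.sub_mem (mem_shiftedZi_iff.1 hz') (mem_shiftedZi_iff.1 hz)

section complexify

open Subfield.complexify

variable {K : Subfield ℝ}

theorem mem_complexify_of_mul_mem_Zi {u g : ℂ} (hg : g ∈ K.complexify) (hg0 : g ≠ 0)
    (hug : u * g ∈ Zi) : u ∈ K.complexify := by
  simpa [hg0] using K.complexify.div_mem (Zi_le hug) hg

theorem eq_one_of_mul_mem_shiftedZi {x u z : ℂ} (hx : x ∉ K.complexify)
    (hu : u ∈ K.complexify) (hz : z ∈ shiftedZi x) (huz : u * z ∈ shiftedZi x) : u = 1 := by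
  by_contra hu1
  have hx_eq : x = ((u * z - x) - u * (z - x)) / (u - 1) := by
    field_simp [sub_ne_zero.2 hu1]; ring
  set Q := K.complexify
  have hnum : (u * z - x) - u * (z - x) ∈ Q :=
    Q.sub_mem (Zi_le (mem_shiftedZi_iff.1 huz)) (Q.mul_mem hu (Zi_le (mem_shiftedZi_iff.1 hz)))
  exact hx (hx_eq ▸ Q.div_mem hnum (Q.sub_mem hu Q.one_mem))

theorem eq_neg_one_of_mul_conj_mem_shiftedZi {x u z : ℂ} (hre : x.re ∈ K) (him : x.im ∉ K)
    (hu : u ∈ K.complexify) (hz : z ∈ shiftedZi x) (huz : u * conj z ∈ shiftedZi x) :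
    u = -1 := by
  by_contra hu1
  have hu1 : u + 1 ≠ 0 := fun h => hu1 (eq_neg_of_add_eq_zero_left h)
  have hconj : conj x = x.re - x.im * I := by
    conv_lhs => rw [← re_add_im x]
    simp only [map_add, map_mul, conj_ofReal, conj_I]
    ring
  have him_eq : (x.im : ℂ) =
      ((u - 1) * x.re - ((u * conj z - x) - u * conj (z - x))) / ((u + 1) * I) := by
    rw [eq_div_iff (mul_ne_zero hu1 I_ne_zero), map_sub]
    linear_combination re_add_im x + u * hconj
  set Q := K.complexify
  have hzx : u * conj (z - x) ∈ Q := Q.mul_mem hu (conj_mem (Zi_le (mem_shiftedZi_iff.1 hz)))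
  have hnum : (u - 1) * x.re - ((u * conj z - x) - u * conj (z - x)) ∈ Q :=
    Q.sub_mem (Q.mul_mem (Q.sub_mem hu Q.one_mem) (ofReal_mem_iff.2 hre))
      (Q.sub_mem (Zi_le (mem_shiftedZi_iff.1 huz)) hzx)
  exact him (ofReal_mem_iff.1 (him_eq ▸ Q.div_mem hnum (Q.mul_mem (Q.add_mem hu Q.one_mem) I_mem)))

theorem OCs_subset_id_neg_conj {x : ℂ} (hre : x.re ∈ K) (him : x.im ∉ K) :
    OCs x ⊆ {id, fun w => -conj w} := by
  rintro f hf
  obtain ⟨R, rfl⟩ := hf.1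
  obtain ⟨z, hz, hRz, g, hg, hg0, hRg⟩ := exists_apply_mem_of_mem_OCs hf
  obtain ⟨u, rfl | rfl⟩ := linear_isometry_complex R
  · simp only [rotation_apply] at hRz hRg
    have hu := mem_complexify_of_mul_mem_Zi (K := K) (Zi_le hg) hg0 hRg
    have hu1 := eq_one_of_mul_mem_shiftedZi (fun h => him h.2) hu hz hRz
    left; ext w; simp [hu1]
  · simp only [LinearIsometryEquiv.trans_apply, rotation_apply, conjLIE_apply] at hRz hRg
    have hu := mem_complexify_of_mul_mem_Zi (K := K) (Zi_le (conj_mem_Zi hg))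
      (by simpa using hg0) hRg
    have hu1 := eq_neg_one_of_mul_conj_mem_shiftedZi hre him hu hz hRz
    right; ext w; simp [hu1]

end complexify

theorem neg_conj_mem_shiftedZi {x z : ℂ} {n : ℤ} (hn : (n : ℝ) = 2 * x.re)
    (hz : z ∈ shiftedZi x) : -conj z ∈ shiftedZi x := by
  have hx : x + conj x = n := by rw [add_conj, ← hn, ofReal_intCast]
  have h : -conj z - x = -conj (z - x) - n := by rw [map_sub, ← hx]; ring
  rw [mem_shiftedZi_iff, h]
  exact Zi.sub_mem (Zi.neg_mem (conj_mem_Zi (mem_shiftedZi_iff.1 hz))) ⟨n, by simp⟩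

theorem neg_conj_mem_OCs_iff (x : ℂ) :
    (fun w => -conj w) ∈ OCs x ↔ ∃ n : ℤ, (n : ℝ) = 2 * x.re := by
  let T : ℂ ≃ₗᵢ[ℝ] ℂ := conjLIE.trans (LinearIsometryEquiv.neg ℝ)
  have hT : ⇑T = fun w => -conj w := by funext w; simp [T]
  constructor
  · intro h
    obtain ⟨z, hz, hTz, -⟩ := exists_apply_mem_of_mem_OCs (hT ▸ h)
    rw [hT] at hTz
    obtain ⟨n, hn⟩ := exists_intCast_eq_re_of_mem_Zi
      (Zi.neg_mem (Zi.add_mem (mem_shiftedZi_iff.1 hz) (mem_shiftedZi_iff.1 hTz)))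
    -- `(z - x) + (-z̄ - x)` has real part `-2 x.re`
    refine ⟨n, ?_⟩
    rw [hn]
    simp only [neg_add_rev, neg_sub, sub_neg_eq_add, add_re, conj_re, sub_re, add_add_sub_cancel]
    ring
  · rintro ⟨n, hn⟩
    have hmaps : Set.MapsTo T (shiftedZi x) (shiftedZi x) := fun z hz =>
      hT ▸ neg_conj_mem_shiftedZi hn hz
    refine hT ▸ mem_OCs_of_image_eq T (hmaps.image_subset.antisymm fun z hz => ⟨T z, hmaps hz, ?_⟩)
    simp [hT]

theorem OC_of_rational_re_irrational_im (a b : ℝ) (ha : ∃ r : ℚ, (r : ℝ) = a)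
    (hb : Irrational b) :
    ((∃ n : ℤ, (n : ℝ) = 2 * a) →
        OCs (a + b * I) = ({id, fun w => -conj w} : Set (ℂ → ℂ))) ∧
      (¬(∃ n : ℤ, (n : ℝ) = 2 * a) → OCs (a + b * I) = ({id} : Set (ℂ → ℂ))) := by
  have hsub : OCs (a + b * I) ⊆ {id, fun w => -conj w} :=
    OCs_subset_id_neg_conj (K := (Rat.castHom ℝ).fieldRange) (by simpa using ha)
      fun ⟨q, hq⟩ => hb ⟨q, by simpa using hq⟩
  have hT := neg_conj_mem_OCs_iff (a + b * I)
  simp only [add_re, ofReal_re, mul_re, I_re, mul_zero, ofReal_im, I_im, mul_one, sub_self,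
    add_zero] at hT
  refine ⟨fun h2a => hsub.antisymm ?_, fun h2a => ?_⟩
  · exact Set.insert_subset (id_mem_OCs _) (Set.singleton_subset_iff.2 (hT.2 h2a))
  · refine Set.Subset.antisymm (fun f hf => ?_) (Set.singleton_subset_iff.2 (id_mem_OCs _))
    rcases hsub hf with rfl | rfl
    · rfl
    · exact absurd (hT.1 hf) h2a
end
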